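/- In the i.i.d. minimax observation model with n units and expected number of treated units E[n_1] = nπ, the minimax root mean square error for estimating the population average treatment effect ψ = E[Y(1) − Y(0)] satisfies inf over estimators, sup over distributions, of √(E[(ψ̂ − ψ)²]) ≥ 1/√(72 nπ). -/

import Mathlib

/-!
Le Cam's two-point method. Let `Y(0) = 0` and `Y(1) ∼ Bernoulli((1 ± d) / 2)` with
`d² = 1 / (4nπ)`, so that the two treatment effects differ by `d`. Only treated units reveal
`Y(1)`, so given the assignment `z` the two laws of the observed data have Bhattacharyya
coefficient `√(1 - d²) ^ k(z)`, where `k(z)` is the number of treated units; by Bernoulli's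
inequality its average `ρ` over the design is at least `1 - nπ d² = 3/4`. By Cauchy–Schwarz the
mean squared errors of any estimator under the two laws add up to at least
`ρ² d² / 2 ≥ 1 / (36nπ)`, so one of them is at least `1 / (72nπ)`.
-/

open MeasureTheory

-- Closed before the main theorem, where `open Real` would turn the variable `π` into `Real.pi`.
section

open Finset Real ProbabilityTheory unitInterval
open scoped ENNReal

theorem sum_sqrt_mul_mul_abs_sub_le {α : Type*} [Fintype α] {a b : α → ℝ}
    (ha : ∀ x, 0 ≤ a x) (hb : ∀ x, 0 ≤ b x) (hb1 : ∑ x, b x = 1) (c : α → ℝ)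
    (p : ℝ) :
    ∑ x, √(a x * b x) * |c x - p| ≤ √(∑ x, a x * (c x - p) ^ 2) := by
  have h := Real.sum_sqrt_mul_sqrt_le univ
    (fun x => mul_nonneg (ha x) (sq_nonneg (c x - p))) hb
  rw [hb1, sqrt_one, mul_one] at h
  refine le_of_eq_of_le (sum_congr rfl fun x _ => ?_) h
  rw [sqrt_mul (ha x), sqrt_mul (ha x), sqrt_sq_eq_abs]
  ring

/-- Le Cam's two-point bound, with the Bhattacharyya coefficient `∑ √(a b)` of the two
weightings in the role of the testing affinity. -/
theorem sq_sum_sqrt_mul_mul_sq_sub_le {α : Type*} [Fintype α] {a b : α → ℝ}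
    (ha : ∀ x, 0 ≤ a x) (hb : ∀ x, 0 ≤ b x) (ha1 : ∑ x, a x = 1) (hb1 : ∑ x, b x = 1)
    (c : α → ℝ) (p q : ℝ) :
    (∑ x, √(a x * b x)) ^ 2 * (p - q) ^ 2 ≤
      2 * (∑ x, a x * (c x - p) ^ 2 + ∑ x, b x * (c x - q) ^ 2) := by
  set Ra := ∑ x, a x * (c x - p) ^ 2
  set Rb := ∑ x, b x * (c x - q) ^ 2
  have hq := sum_sqrt_mul_mul_abs_sub_le hb ha ha1 c q
  simp only [mul_comm (b _) (a _)] at hq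
  have hsplit : (∑ x, √(a x * b x)) * |p - q| ≤ √Ra + √Rb := calc
    _ = ∑ x, √(a x * b x) * |(c x - q) - (c x - p)| := by
      rw [sum_mul]; congr! 2; ring_nf
    _ ≤ ∑ x, (√(a x * b x) * |c x - p| + √(a x * b x) * |c x - q|) := by
      gcongr with x
      rw [← mul_add, add_comm]
      exact mul_le_mul_of_nonneg_left (abs_sub _ _) (sqrt_nonneg _)
    _ ≤ √Ra + √Rb := by
      rw [sum_add_distrib]
      exact add_le_add (sum_sqrt_mul_mul_abs_sub_le ha hb hb1 c p) hq
  have hRa : √Ra ^ 2 = Ra := sq_sqrt (sum_nonneg fun x _ => mul_nonneg (ha x) (sq_nonneg _))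
  have hRb : √Rb ^ 2 = Rb := sq_sqrt (sum_nonneg fun x _ => mul_nonneg (hb x) (sq_nonneg _))
  have hρ : 0 ≤ (∑ x, √(a x * b x)) * |p - q| := by positivity
  calc (∑ x, √(a x * b x)) ^ 2 * (p - q) ^ 2 = ((∑ x, √(a x * b x)) * |p - q|) ^ 2 := by
        rw [mul_pow, sq_abs]
    _ ≤ (√Ra + √Rb) ^ 2 := pow_le_pow_left₀ hρ hsplit 2
    _ ≤ 2 * (Ra + Rb) := by nlinarith [sq_nonneg (√Ra - √Rb)]

theorem one_add_mul_sub_one_le_sum_mul_pow {ι : Type*} (s : Finset ι) {w : ι → ℝ}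
    (hw : ∀ i ∈ s, 0 ≤ w i) (hw1 : ∑ i ∈ s, w i = 1) (k : ι → ℕ) {r : ℝ}
    (hr : -1 ≤ r) :
    1 + (∑ i ∈ s, w i * k i) * (r - 1) ≤ ∑ i ∈ s, w i * r ^ k i := calc
  _ = ∑ i ∈ s, w i * (1 + k i * (r - 1)) := by
    simp only [mul_add, mul_one, sum_add_distrib, hw1, sum_mul, mul_assoc]
  _ ≤ ∑ i ∈ s, w i * r ^ k i := by
    gcongr with i hi
    · exact hw i hi
    · simpa using one_add_mul_le_pow (a := r - 1) (by linarith) (k i)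

theorem lintegral_map_of_countable {α β : Type*} [MeasurableSpace α] [MeasurableSpace β]
    [Countable α] [MeasurableSingletonClass α] [MeasurableSingletonClass β]
    (μ : Measure α) {f : α → β} (hf : Measurable f) (g : β → ℝ≥0∞) :
    ∫⁻ y, g y ∂μ.map f = ∫⁻ x, g (f x) ∂μ := by
  rw [← Measure.sum_smul_dirac μ, Measure.map_sum hf.aemeasurable]
  simp only [Measure.map_smul, Measure.map_dirac' hf, lintegral_sum_measure,
    lintegral_smul_measure, lintegral_dirac]

theorem lintegral_ofReal_eq_sum {α : Type*} [Fintype α] [MeasurableSpace α]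
    [MeasurableSingletonClass α] (μ : Measure α) [IsFiniteMeasure μ] {f : α → ℝ}
    (hf : 0 ≤ f) :
    ∫⁻ x, ENNReal.ofReal (f x) ∂μ = ENNReal.ofReal (∑ x, μ.real {x} * f x) := by
  rw [lintegral_fintype,
    ENNReal.ofReal_sum_of_nonneg fun x _ => mul_nonneg measureReal_nonneg (hf x)]
  refine sum_congr rfl fun x _ => ?_
  rw [ENNReal.ofReal_mul measureReal_nonneg, measureReal_def,
    ENNReal.ofReal_toReal (measure_ne_top μ _), mul_comm]

noncomputable def bhattacharyya {α : Type*} [Fintype α] [MeasurableSpace α]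
    (μ ν : Measure α) : ℝ :=
  ∑ x, √(μ.real {x} * ν.real {x})

theorem bhattacharyya_self {α : Type*} [Fintype α] [MeasurableSpace α]
    [MeasurableSingletonClass α] (μ : Measure α) [IsProbabilityMeasure μ] :
    bhattacharyya μ μ = 1 := by
  simp [bhattacharyya, sqrt_mul_self measureReal_nonneg]

theorem bhattacharyya_pi {ι : Type*} [Fintype ι] [DecidableEq ι] {α : ι → Type*}
    [∀ i, Fintype (α i)] [∀ i, MeasurableSpace (α i)]
    (μ ν : ∀ i, Measure (α i)) [∀ i, SigmaFinite (μ i)] [∀ i, SigmaFinite (ν i)] :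
    bhattacharyya (Measure.pi μ) (Measure.pi ν) = ∏ i, bhattacharyya (μ i) (ν i) := by
  simp only [bhattacharyya, Fintype.prod_sum, measureReal_def, Measure.pi_singleton,
    ENNReal.toReal_prod, ← prod_mul_distrib]
  exact sum_congr rfl fun x _ => sqrt_prod _ fun i _ => by positivity

theorem bhattacharyya_bernoulliMeasure (p q : I) :
    bhattacharyya Ber(true, false, p) Ber(true, false, q) =
      √p * √q + √(1 - p) * √(1 - q) := by
  simp [bhattacharyya]

theorem bhattacharyya_bernoulliMeasure_of_add_eq_one {p q : I} (hpq : (p : ℝ) + q = 1) :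
    bhattacharyya Ber(true, false, p) Ber(true, false, q) = √(1 - (p - q) ^ 2) := by
  have h : 1 - ((p : ℝ) - q) ^ 2 = 2 ^ 2 * (p * q) := by
    rw [← one_pow 2, ← hpq]; ring
  rw [bhattacharyya_bernoulliMeasure, h, sqrt_mul (by positivity), sqrt_sq zero_le_two,
    sqrt_mul p.2.1, show (1 : ℝ) - p = q by linarith, show (1 : ℝ) - q = p by linarith]
  ring

noncomputable def bernoulliTreatedLaw (p : I) : Measure (ℝ × ℝ) :=
  Ber(((0 : ℝ), (1 : ℝ)), (0, 0), p)

instance (p : I) : IsProbabilityMeasure (bernoulliTreatedLaw p) := by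
  unfold bernoulliTreatedLaw; infer_instance

theorem bernoulliTreatedLaw_eq_map (p : I) :
    bernoulliTreatedLaw p =
      Ber(true, false, p).map fun t => ((0 : ℝ), if t then (1 : ℝ) else 0) := by
  rw [map_bernoulliMeasure]; rfl

theorem ae_mem_Icc_bernoulliTreatedLaw (p : I) :
    ∀ᵐ y ∂bernoulliTreatedLaw p, y ∈ Set.Icc (0 : ℝ) 1 ×ˢ Set.Icc (0 : ℝ) 1 := by
  rw [ae_iff, bernoulliTreatedLaw]
  exact bernoulliMeasure_apply_of_notMem_of_notMem p
    (measurableSet_Icc.prod measurableSet_Icc).compl (by simp) (by simp)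

theorem integral_sub_bernoulliTreatedLaw (p : I) :
    ∫ y, (y.2 - y.1) ∂bernoulliTreatedLaw p = p := by
  simp [bernoulliTreatedLaw, integral_bernoulliMeasure]

variable {n : ℕ}

/-- The law of the observed outcomes `Y_i(z_i)` under `bernoulliTreatedLaw p`, coded in `Bool`;
for an untreated unit `Ber(false, false, p) = dirac false`. -/
noncomputable def observedLaw (p : I) (z : Fin n → Bool) : Measure (Fin n → Bool) :=
  Measure.pi fun i => Ber(z i, false, p)

instance (p : I) (z : Fin n → Bool) : IsProbabilityMeasure (observedLaw p z) := by
  unfold observedLaw; infer_instance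

theorem observedLaw_eq_map (p : I) (z : Fin n → Bool) :
    observedLaw p z = (Measure.pi fun _ => Ber(true, false, p)).map fun b i => z i && b i := by
  rw [Measure.pi_map_pi fun _ => (measurable_of_countable _).aemeasurable]
  simp [observedLaw]

theorem lintegral_prod_pi_bernoulliTreatedLaw (ζ : Measure (Fin n → Bool))
    [SFinite ζ] (p : I) (g : (Fin n → Bool) × (Fin n → ℝ) → ℝ≥0∞) :
    ∫⁻ ω, g (ω.1, fun i => if ω.1 i then (ω.2 i).2 else (ω.2 i).1)
        ∂ζ.prod (Measure.pi fun _ => bernoulliTreatedLaw p) =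
      ∫⁻ z, ∫⁻ y, g (z, fun i => if y i then 1 else 0) ∂observedLaw p z ∂ζ := by
  have hpi : Measure.pi (fun _ : Fin n => bernoulliTreatedLaw p) =
      (Measure.pi fun _ => Ber(true, false, p)).map
        fun b i => ((0 : ℝ), if b i then (1 : ℝ) else 0) := by
    rw [Measure.pi_map_pi (f := fun _ (t : Bool) => ((0 : ℝ), if t then (1 : ℝ) else 0))
      fun _ => (measurable_of_countable _).aemeasurable]
    simp_rw [bernoulliTreatedLaw_eq_map]
  rw [hpi, ← Measure.map_id (μ := ζ), Measure.map_prod_map _ _ measurable_id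
    (measurable_of_countable _), Measure.map_id,
    lintegral_map_of_countable _ (measurable_of_countable _),
    lintegral_prod _ (measurable_of_countable _).aemeasurable]
  refine lintegral_congr fun z => ?_
  rw [observedLaw_eq_map, lintegral_map_of_countable _ (measurable_of_countable _)]
  refine lintegral_congr fun b => congrArg (fun y => g (z, y)) (funext fun i => ?_)
  by_cases hz : z i <;> simp [hz]

theorem bhattacharyya_observedLaw (p q : I) (z : Fin n → Bool) :
    bhattacharyya (observedLaw p z) (observedLaw q z) =
      bhattacharyya Ber(true, false, p) Ber(true, false, q) ^ #{i | z i = true} := by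
  have hcoord (i : Fin n) : bhattacharyya Ber(z i, false, p) Ber(z i, false, q) =
      if z i = true then bhattacharyya Ber(true, false, p) Ber(true, false, q) else 1 := by
    cases z i
    · simp [bhattacharyya_self]
    · rfl
  rw [observedLaw, observedLaw, bhattacharyya_pi]
  simp only [hcoord, prod_ite, prod_const, one_pow, mul_one]

noncomputable def observedWeight (ζ : Measure (Fin n → Bool)) (p : I)
    (x : (Fin n → Bool) × (Fin n → Bool)) : ℝ :=
  ζ.real {x.1} * (observedLaw p x.1).real {x.2}

theorem observedWeight_nonneg (ζ : Measure (Fin n → Bool)) (p : I)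
    (x : (Fin n → Bool) × (Fin n → Bool)) :
    0 ≤ observedWeight ζ p x :=
  mul_nonneg measureReal_nonneg measureReal_nonneg

theorem sum_observedWeight_mul (ζ : Measure (Fin n → Bool)) (p : I)
    (f : (Fin n → Bool) × (Fin n → Bool) → ℝ) :
    ∑ x, observedWeight ζ p x * f x =
      ∑ z, ζ.real {z} * ∑ y, (observedLaw p z).real {y} * f (z, y) := by
  simp only [observedWeight, Fintype.sum_prod_type, mul_sum, mul_assoc]

theorem sum_observedWeight (ζ : Measure (Fin n → Bool)) [IsProbabilityMeasure ζ] (p : I) :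
    ∑ x, observedWeight ζ p x = 1 := by
  simpa using sum_observedWeight_mul ζ p 1

theorem sum_sqrt_observedWeight_mul (ζ : Measure (Fin n → Bool)) (p q : I) :
    ∑ x, √(observedWeight ζ p x * observedWeight ζ q x) =
      ∑ z, ζ.real {z} * bhattacharyya (observedLaw p z) (observedLaw q z) := by
  simp only [observedWeight, bhattacharyya, Fintype.sum_prod_type, mul_sum]
  refine sum_congr rfl fun z _ => sum_congr rfl fun y _ => ?_
  rw [mul_mul_mul_comm, sqrt_mul (mul_self_nonneg _), sqrt_mul_self measureReal_nonneg]

theorem one_sub_mul_sq_sub_le_sum_sqrt_observedWeight (ζ : Measure (Fin n → Bool))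
    [IsProbabilityMeasure ζ] {p q : I} (hpq : (p : ℝ) + q = 1) :
    1 - (∑ z, ζ.real {z} * (#{i | z i = true} : ℝ)) * (p - q) ^ 2 ≤
      ∑ x, √(observedWeight ζ p x * observedWeight ζ q x) := by
  have hs : 1 - ((p : ℝ) - q) ^ 2 ≤ bhattacharyya Ber(true, false, p) Ber(true, false, q) := by
    rw [bhattacharyya_bernoulliMeasure_of_add_eq_one hpq]
    have h1 : 0 ≤ 1 - ((p : ℝ) - q) ^ 2 := by nlinarith [p.2.1, p.2.2]
    exact le_sqrt_of_sq_le (by nlinarith [mul_nonneg h1 (sq_nonneg ((p : ℝ) - q))])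
  have hs0 : 0 ≤ bhattacharyya Ber(true, false, p) Ber(true, false, q) :=
    sum_nonneg fun _ _ => sqrt_nonneg _
  have hk : 0 ≤ ∑ z, ζ.real {z} * (#{i | z i = true} : ℝ) :=
    sum_nonneg fun _ _ => mul_nonneg measureReal_nonneg (Nat.cast_nonneg _)
  rw [sum_sqrt_observedWeight_mul]
  simp only [bhattacharyya_observedLaw]
  refine le_trans ?_ (one_add_mul_sub_one_le_sum_mul_pow univ
    (fun z _ => measureReal_nonneg (μ := ζ))
    (by rw [sum_measureReal_singleton, coe_univ, probReal_univ])
    (fun z : Fin n → Bool => #{i | z i = true}) (by linarith))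
  nlinarith

theorem exists_le_sum_observedLaw_sq_sub (ζ : Measure (Fin n → Bool))
    [IsProbabilityMeasure ζ] {m : ℝ} (hm : 1 / 4 ≤ m)
    (hζ : ∑ z, ζ.real {z} * (#{i | z i = true} : ℝ) = m)
    (c : (Fin n → Bool) → (Fin n → Bool) → ℝ) :
    ∃ p : I, 1 / (72 * m) ≤
      ∑ z, ζ.real {z} * ∑ y, (observedLaw p z).real {y} * (c z y - p) ^ 2 := by
  have hm0 : 0 < m := by linarith
  -- `d = p - q`; the paper's `δ² = 1 / (16 nπ)` with `d = 2δ`.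
  set d := 1 / (2 * √m)
  have hd : d ^ 2 = 1 / (4 * m) := by
    rw [div_pow, mul_pow, sq_sqrt hm0.le]; norm_num
  have hd0 : 0 ≤ d := by positivity
  have hd1 : d ≤ 1 := by
    have : d ^ 2 ≤ 1 := by rw [hd, div_le_one (by positivity)]; linarith
    nlinarith
  let p : I := ⟨(1 + d) / 2, by constructor <;> linarith⟩
  let q : I := ⟨(1 - d) / 2, by constructor <;> linarith⟩
  have hpq : (p : ℝ) + q = 1 := show (1 + d) / 2 + (1 - d) / 2 = 1 by ring
  have hsep : ((p : ℝ) - q) ^ 2 = 1 / (4 * m) := by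
    rw [← hd]; congr 1; show (1 + d) / 2 - (1 - d) / 2 = d; ring
  have hρ : 3 / 4 ≤ ∑ x, √(observedWeight ζ p x * observedWeight ζ q x) := by
    have h := one_sub_mul_sq_sub_le_sum_sqrt_observedWeight ζ hpq
    rw [hζ, hsep, show m * (1 / (4 * m)) = 1 / 4 by field_simp] at h
    linarith
  have hLeCam := sq_sum_sqrt_mul_mul_sq_sub_le (observedWeight_nonneg ζ p)
    (observedWeight_nonneg ζ q) (sum_observedWeight ζ p) (sum_observedWeight ζ q)
    (fun x => c x.1 x.2) p q
  simp only [sum_observedWeight_mul ζ _ fun x => (c x.1 x.2 - _) ^ 2, hsep] at hLeCam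
  by_contra! h
  have hρ2 : 9 / 16 * (1 / (4 * m)) ≤
      (∑ x, √(observedWeight ζ p x * observedWeight ζ q x)) ^ 2 * (1 / (4 * m)) := by
    gcongr; nlinarith
  have h72 : 1 / (72 * m) = 1 / (4 * m) / 18 := by field_simp; norm_num
  linarith [h p, h q, div_pos one_pos (by positivity : 0 < 4 * m)]

end

theorem minimax_lower_bound_iid_general (n : ℕ) (π : ℝ)
    (hnπ : 1 < n * π)
    (ζ : Measure (Fin n → Bool)) [IsProbabilityMeasure ζ]
    (hdesign : ∫ z, ((Finset.univ.filter fun i => z i = true).card : ℝ) ∂ζ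
      = n * π)
    (ψhat : (Fin n → Bool) × (Fin n → ℝ) → ℝ) :
    ∃ ν : Measure (ℝ × ℝ), IsProbabilityMeasure ν ∧
      (∀ᵐ y ∂ν, y ∈ Set.Icc (0:ℝ) 1 ×ˢ Set.Icc (0:ℝ) 1) ∧
      ENNReal.ofReal (1 / (72 * n * π)) ≤
        ∫⁻ ω, ENNReal.ofReal
          ((ψhat (ω.1, fun i => if ω.1 i then (ω.2 i).2 else (ω.2 i).1)
            - ∫ y, (y.2 - y.1) ∂ν)^2)
          ∂(ζ.prod (Measure.pi fun _ : Fin n => ν)) := by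
  rw [integral_fintype Integrable.of_finite] at hdesign
  obtain ⟨p, hp⟩ := exists_le_sum_observedLaw_sq_sub ζ (by linarith) hdesign
    fun z y => ψhat (z, fun i => if y i then 1 else 0)
  refine ⟨bernoulliTreatedLaw p, inferInstance, ae_mem_Icc_bernoulliTreatedLaw p, ?_⟩
  rw [integral_sub_bernoulliTreatedLaw,
    lintegral_prod_pi_bernoulliTreatedLaw ζ p fun x => ENNReal.ofReal ((ψhat x - p) ^ 2)]
  simp only [lintegral_ofReal_eq_sum _ fun _ => sq_nonneg _]
  rw [lintegral_ofReal_eq_sum _ fun _ => Finset.sum_nonneg fun _ _ =>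
    mul_nonneg measureReal_nonneg (sq_nonneg _), mul_assoc]
  exact ENNReal.ofReal_le_ofReal hp

/-- Minimax lower bound in the i.i.d. observation model: for any design `ζ`
over treatment assignments with expected number of treated units `nπ` and any
(measurable) estimator `ψ̂` of the population average treatment effect from the
observed data `(Z, (Y_i(Z_i))_i)`, there exists an i.i.d. potential-outcome
distribution `ν` on `[0,1]²` for which the mean squared error is at least
`1/(72nπ)`, i.e. the RMSE is at least `1/√(72nπ)`. -/
theorem minimax_lower_bound_iid (n : ℕ) (π : ℝ) (hπ : 0 < π) (hπ1 : π ≤ 1)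
    (hnπ : 1 < n * π)
    (ζ : Measure (Fin n → Bool)) [IsProbabilityMeasure ζ]
    (hdesign : ∫ z, ((Finset.univ.filter fun i => z i = true).card : ℝ) ∂ζ
      = n * π)
    (ψhat : (Fin n → Bool) × (Fin n → ℝ) → ℝ) (hψ : Measurable ψhat) :
    ∃ ν : Measure (ℝ × ℝ), IsProbabilityMeasure ν ∧
      (∀ᵐ y ∂ν, y ∈ Set.Icc (0:ℝ) 1 ×ˢ Set.Icc (0:ℝ) 1) ∧
      ENNReal.ofReal (1 / (72 * n * π)) ≤
        ∫⁻ ω, ENNReal.ofReal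
          ((ψhat (ω.1, fun i => if ω.1 i then (ω.2 i).2 else (ω.2 i).1)
            - ∫ y, (y.2 - y.1) ∂ν)^2)
          ∂(ζ.prod (Measure.pi fun _ : Fin n => ν)) :=
  minimax_lower_bound_iid_general n π hnπ ζ hdesign ψhat
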